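/- Suppose p + q < 1 and let ω^l, ω^u be reals with 0 ≤ ω^l < ω* < ω^u ≤ 1. The sets { k ∈ ℕ : τ^k(p) ∈ (ω^l, ω^u) } and { k ∈ ℕ : τ^k(1−q) ∈ (ω^l, ω^u) } are nonempty; let L = 1 + (their respective least element for p) and K = 1 + (the least element for 1−q). Then, with f_δ(ω) = (L − K)·(p − ω(p+q)) − (1 − τ^{K−1}(1−q)) − τ^{L−1}(p) (where L, K are cast to reals), one has f_δ(ω^l) < 0 and f_δ(ω^u) < 0. -/

import Mathlib

/-- The one-step belief update map τ(ω) = p + ω(1 − p − q). -/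
noncomputable def tau (p q ω : ℝ) : ℝ := p + ω * (1 - p - q)

/-- The equilibrium belief state ω* = p/(p+q). -/
noncomputable def wstar (p q : ℝ) : ℝ := p / (p + q)

/-- f_δ(ω) = (L − K)·(p − ω(p+q)) − (1 − τ^{K−1}(1−q)) − τ^{L−1}(p),
with L, K cast to reals. Note τ^{K−1}(1−q) = 1 − q^{(K)} and τ^{L−1}(p) = p^{(L)}. -/
noncomputable def fdelta (p q : ℝ) (L K : ℕ) (ω : ℝ) : ℝ :=
  ((L : ℝ) - (K : ℝ)) * (p - ω * (p + q)) - (1 - (tau p q)^[K - 1] (1 - q)) -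
    (tau p q)^[L - 1] p

lemma tau_iter (p q : ℝ) (hpq : p + q ≠ 0) (k : ℕ) (x : ℝ) :
    (tau p q)^[k] x = wstar p q + (x - wstar p q) * (1 - p - q) ^ k := by
  induction k with
  | zero => simp
  | succ n ih =>
    rw [Function.iterate_succ_apply', ih, tau]
    have hw : wstar p q * (p + q) = p := by rw [wstar]; exact div_mul_cancel₀ p hpq
    linear_combination -hw

lemma geom_aux (a b c : ℝ) (ha : 0 ≤ a) (hb0 : 0 ≤ b) (hb1 : b ≤ 1) (hc : 0 ≤ c)
    (ih : (a + 1) * ((1 - b) * c) ≤ 1 - c * b) :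
    (a + 1 + 1) * ((1 - b) * (c * b)) ≤ 1 - c * b * b := by
  have H : (a + 1) * (1 - b) * (c * b) ≤ (a + 1) * (1 - b) * c := by
    apply mul_le_mul_of_nonneg_left _ (by nlinarith : (0:ℝ) ≤ (a + 1) * (1 - b))
    nlinarith
  nlinarith [H, ih]

lemma geom_bound (r : ℝ) (h0 : 0 ≤ r) (h1 : r ≤ 1) (n : ℕ) :
    (n + 1 : ℝ) * ((1 - r) * r ^ n) ≤ 1 - r ^ (n + 1) := by
  induction n with
  | zero => simp
  | succ m ih =>
    have hp : (0:ℝ) ≤ r ^ m := pow_nonneg h0 m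
    push_cast
    push_cast at ih
    rw [pow_succ] at ih
    rw [pow_succ, pow_succ, pow_succ]
    exact geom_aux (m : ℝ) r (r ^ m) (Nat.cast_nonneg m) h0 h1 hp ih

set_option maxHeartbeats 1000000 in
/-- Suppose p + q < 1 and 0 ≤ ω^l < ω* < ω^u ≤ 1. The hitting sets of
p and 1−q for the sampling region (ω^l, ω^u) are nonempty; with
L = 1 + (least element for p) and K = 1 + (least element for 1−q), one has
f_δ(ω^l) < 0 and f_δ(ω^u) < 0. -/
theorem fdelta_neg_at_thresholds (p q : ℝ) (hp : 0 < p) (hpq : p ≤ q) (hq : q < 1)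
    (hsum : p + q < 1) (ωl ωu : ℝ) (h1 : 0 ≤ ωl) (h2 : ωl < wstar p q)
    (h3 : wstar p q < ωu) (h4 : ωu ≤ 1) :
    {k : ℕ | (tau p q)^[k] p ∈ Set.Ioo ωl ωu}.Nonempty ∧
    {k : ℕ | (tau p q)^[k] (1 - q) ∈ Set.Ioo ωl ωu}.Nonempty ∧
    fdelta p q (sInf {k : ℕ | (tau p q)^[k] p ∈ Set.Ioo ωl ωu} + 1)
      (sInf {k : ℕ | (tau p q)^[k] (1 - q) ∈ Set.Ioo ωl ωu} + 1) ωl < 0 ∧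
    fdelta p q (sInf {k : ℕ | (tau p q)^[k] p ∈ Set.Ioo ωl ωu} + 1)
      (sInf {k : ℕ | (tau p q)^[k] (1 - q) ∈ Set.Ioo ωl ωu} + 1) ωu < 0 := by
  set w := wstar p q with hwdef
  have hq0 : 0 < q := lt_of_lt_of_le hp hpq
  have hpq0 : (0:ℝ) < p + q := by linarith
  have hpqne : p + q ≠ 0 := ne_of_gt hpq0
  have hw : w * (p + q) = p := by rw [hwdef, wstar]; exact div_mul_cancel₀ p hpqne
  have hw0 : 0 < w := div_pos hp hpq0
  have hw1 : w < 1 := by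
    rw [hwdef, wstar, div_lt_one hpq0]; linarith
  have hr0 : (0:ℝ) < 1 - p - q := by linarith
  have hr1 : (1:ℝ) - p - q < 1 := by linarith
  have hpw : p - w = -(w * (1 - p - q)) := by linear_combination -hw
  have hqw : (1 - q) - w = (1 - w) * (1 - p - q) := by linear_combination -hw
  have hiterp : ∀ k : ℕ, (tau p q)^[k] p = w - w * (1 - p - q) ^ (k + 1) := by
    intro k
    rw [tau_iter p q hpqne, ← hwdef, hpw, pow_succ]; ring
  have hiterq : ∀ k : ℕ, (tau p q)^[k] (1 - q) = w + (1 - w) * (1 - p - q) ^ (k + 1) := by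
    intro k
    rw [tau_iter p q hpqne, ← hwdef, hqw, pow_succ]; ring
  have hne1 : {k : ℕ | (tau p q)^[k] p ∈ Set.Ioo ωl ωu}.Nonempty := by
    obtain ⟨n, hn⟩ := exists_pow_lt_of_lt_one (show (0:ℝ) < w - ωl by linarith) hr1
    refine ⟨n, ?_⟩
    have hrp : (0:ℝ) < (1 - p - q) ^ (n + 1) := pow_pos hr0 _
    have hle : (1 - p - q) ^ (n + 1) ≤ (1 - p - q) ^ n :=
      pow_le_pow_of_le_one hr0.le hr1.le (by omega)
    simp only [Set.mem_setOf_eq, hiterp n, Set.mem_Ioo]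
    constructor
    · nlinarith [mul_nonneg (by linarith : (0:ℝ) ≤ 1 - w) hrp.le]
    · nlinarith [mul_pos hw0 hrp]
  have hne2 : {k : ℕ | (tau p q)^[k] (1 - q) ∈ Set.Ioo ωl ωu}.Nonempty := by
    obtain ⟨n, hn⟩ := exists_pow_lt_of_lt_one (show (0:ℝ) < ωu - w by linarith) hr1
    refine ⟨n, ?_⟩
    have hrp : (0:ℝ) < (1 - p - q) ^ (n + 1) := pow_pos hr0 _
    have hle : (1 - p - q) ^ (n + 1) ≤ (1 - p - q) ^ n :=
      pow_le_pow_of_le_one hr0.le hr1.le (by omega)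
    simp only [Set.mem_setOf_eq, hiterq n, Set.mem_Ioo]
    constructor
    · nlinarith [mul_nonneg (by linarith : (0:ℝ) ≤ 1 - w) hrp.le]
    · nlinarith [mul_nonneg (by linarith : (0:ℝ) ≤ 1 - w) hrp.le]
  refine ⟨hne1, hne2, ?_, ?_⟩ <;>
  · set L0 := sInf {k : ℕ | (tau p q)^[k] p ∈ Set.Ioo ωl ωu} with hL0def
    set K0 := sInf {k : ℕ | (tau p q)^[k] (1 - q) ∈ Set.Ioo ωl ωu} with hK0def
    have hLmem := Nat.sInf_mem hne1
    have hKmem := Nat.sInf_mem hne2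
    rw [← hL0def] at hLmem
    rw [← hK0def] at hKmem
    simp only [Set.mem_setOf_eq, Set.mem_Ioo, hiterp, hiterq] at hLmem hKmem
    rw [fdelta, Nat.add_sub_cancel, Nat.add_sub_cancel, hiterp, hiterq]
    push_cast
    have hrL1 : (0:ℝ) < (1 - p - q) ^ (L0 + 1) := pow_pos hr0 _
    have hrK1 : (0:ℝ) < (1 - p - q) ^ (K0 + 1) := pow_pos hr0 _
    have hrL1' : (1 - p - q) ^ (L0 + 1) < 1 := pow_lt_one₀ hr0.le hr1 (by omega)
    have hrK1' : (1 - p - q) ^ (K0 + 1) < 1 := pow_lt_one₀ hr0.le hr1 (by omega)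
    have hK0c : (0:ℝ) ≤ (K0 : ℝ) := Nat.cast_nonneg _
    have hL0c : (0:ℝ) ≤ (L0 : ℝ) := Nat.cast_nonneg _
    have hAl : 0 < p - ωl * (p + q) := by nlinarith [mul_lt_mul_of_pos_right h2 hpq0]
    have hAu : 0 < ωu * (p + q) - p := by nlinarith [mul_lt_mul_of_pos_right h3 hpq0]
    first
    | · -- goal at ωl
        rcases le_or_gt L0 K0 with hLK | hLK
        · have hc : ((L0:ℝ) - K0) ≤ 0 := by
            have := Nat.cast_le (α := ℝ).mpr hLK
            linarith
          nlinarith [mul_nonpos_of_nonpos_of_nonneg hc hAl.le,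
            mul_nonneg (by linarith : (0:ℝ) ≤ 1 - w) (by linarith : (0:ℝ) ≤ 1 - (1 - p - q) ^ (K0 + 1))]
        · -- K0 < L0 : use minimality of L0
          have hL1 : 1 ≤ L0 := by omega
          have hnot : (L0 - 1) ∉ {k : ℕ | (tau p q)^[k] p ∈ Set.Ioo ωl ωu} :=
            Nat.notMem_of_lt_sInf (by rw [← hL0def]; omega)
          simp only [Set.mem_setOf_eq, Set.mem_Ioo, hiterp, Nat.sub_add_cancel hL1,
            not_and, not_lt] at hnot
          have hrL : (0:ℝ) < (1 - p - q) ^ L0 := pow_pos hr0 _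
          have hmin : w - w * (1 - p - q) ^ L0 ≤ ωl := by
            by_contra hcon
            push_neg at hcon
            have := hnot hcon
            nlinarith
          have hAle : p - ωl * (p + q) ≤ w * (1 - p - q) ^ L0 * (p + q) := by
            nlinarith [mul_le_mul_of_nonneg_right hmin hpq0.le]
          have hLKc : (K0:ℝ) + 1 ≤ (L0:ℝ) := by exact_mod_cast hLK
          have hgb := geom_bound (1 - p - q) hr0.le hr1.le L0
          nlinarith [mul_le_mul_of_nonneg_left hAle (by linarith : (0:ℝ) ≤ (L0:ℝ) - (K0:ℝ)),
            mul_le_mul_of_nonneg_left hgb hw0.le,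
            mul_nonneg hK0c (mul_nonneg (mul_nonneg hw0.le hrL.le) hpq0.le),
            mul_pos (mul_pos hw0 hrL) hpq0,
            mul_nonneg (by linarith : (0:ℝ) ≤ 1 - w) (by linarith : (0:ℝ) ≤ 1 - (1 - p - q) ^ (K0 + 1))]
    | · -- goal at ωu
        rcases le_or_gt K0 L0 with hKL | hKL
        · have hc : (0:ℝ) ≤ ((L0:ℝ) - K0) := by
            have := Nat.cast_le (α := ℝ).mpr hKL
            linarith
          nlinarith [mul_nonneg hc hAu.le,
            mul_nonneg (by linarith : (0:ℝ) ≤ 1 - w) (by linarith : (0:ℝ) ≤ 1 - (1 - p - q) ^ (K0 + 1))]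
        · -- L0 < K0 : use minimality of K0
          have hK1 : 1 ≤ K0 := by omega
          have hnot : (K0 - 1) ∉ {k : ℕ | (tau p q)^[k] (1 - q) ∈ Set.Ioo ωl ωu} :=
            Nat.notMem_of_lt_sInf (by rw [← hK0def]; omega)
          simp only [Set.mem_setOf_eq, Set.mem_Ioo, hiterq, Nat.sub_add_cancel hK1,
            not_and, not_lt] at hnot
          have hrK : (0:ℝ) < (1 - p - q) ^ K0 := pow_pos hr0 _
          have hmin : ωu ≤ w + (1 - w) * (1 - p - q) ^ K0 := by
            apply hnot
            nlinarith
          have hAle : ωu * (p + q) - p ≤ (1 - w) * (1 - p - q) ^ K0 * (p + q) := by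
            nlinarith [mul_le_mul_of_nonneg_right hmin hpq0.le]
          have hLKc : (L0:ℝ) + 1 ≤ (K0:ℝ) := by exact_mod_cast hKL
          have hgb := geom_bound (1 - p - q) hr0.le hr1.le K0
          nlinarith [mul_le_mul_of_nonneg_left hAle (by linarith : (0:ℝ) ≤ (K0:ℝ) - (L0:ℝ)),
            mul_le_mul_of_nonneg_left hgb (by linarith : (0:ℝ) ≤ 1 - w),
            mul_nonneg hL0c (mul_nonneg (mul_nonneg (by linarith : (0:ℝ) ≤ 1 - w) hrK.le) hpq0.le),
            mul_pos (mul_pos (by linarith : (0:ℝ) < 1 - w) hrK) hpq0,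
            mul_nonneg hw0.le (by linarith : (0:ℝ) ≤ 1 - (1 - p - q) ^ (L0 + 1))]
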